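/- arXiv:1803.02781 — 3 statements merged into one kernel-verified Lean document; each statement's English description precedes it below -/
import Mathlib

section
/- M-step increases the CML criterion: fix a hard assignment z such that every class is nonempty, i.e., for each c ∈ C there exists q with z q = c. Define the maximum-likelihood estimators p̂_z(c) := |{q : z q = c}| / |Q| and π̂_z(c, a, l) := (∑_{q : z q = c} n q a l) / (∑_{l' ∈ C} ∑_{q : z q = c} n q a l'), assuming for each c, a that ∑_{l'} ∑_{q : z q = c} n q a l' > 0. Then for all parameters p : C → ℝ with p c ≥ 0, ∑_c p c = 1, p (z q) > 0 for all q, and all π : C → A → C → ℝ with π c a l ≥ 0, ∑_l π c a l = 1 for each c, a, and π (z q) a l > 0 whenever n q a l > 0, one has C₂(z, p, π) ≤ C₂(z, p̂_z, π̂_z). -/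
open Finset

/-- `fDS n π q c = ∏ a, ∏ l, (π c a l) ^ (n q a l)`, the likelihood of the responses to
question `q` given that its true answer is `c`, under error rates `π`. -/
noncomputable def fDS {Q A C : Type*} [Fintype A] [Fintype C]
    (n : Q → A → C → ℕ) (π : C → A → C → ℝ) (q : Q) (c : C) : ℝ :=
  ∏ a, ∏ l, (π c a l) ^ (n q a l)

/-- The classification maximum likelihood (CML) criterion
`C₂(z, p, π) = ∑ q, log (p (z q) * f(q, z q))`. -/
noncomputable def C2 {Q A C : Type*} [Fintype Q] [Fintype A] [Fintype C]
    (n : Q → A → C → ℕ) (z : Q → C) (p : C → ℝ) (π : C → A → C → ℝ) : ℝ :=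
  ∑ q, Real.log (p (z q) * fDS n π q (z q))

/-- M-step estimator for the class marginals: `p̂_z(c) = |{q : z q = c}| / |Q|`. -/
noncomputable def phat {Q C : Type*} [Fintype Q] [DecidableEq C] (z : Q → C) (c : C) : ℝ :=
  ((Finset.univ.filter (fun q => z q = c)).card : ℝ) / (Fintype.card Q : ℝ)

/-- M-step estimator for the annotator error rates:
`π̂_z(c, a, l) = (∑_{q : z q = c} n q a l) / (∑ l', ∑_{q : z q = c} n q a l')`. -/
noncomputable def pihat {Q A C : Type*} [Fintype Q] [Fintype C] [DecidableEq C]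
    (n : Q → A → C → ℕ) (z : Q → C) (c : C) (a : A) (l : C) : ℝ :=
  (∑ q ∈ Finset.univ.filter (fun q => z q = c), (n q a l : ℝ)) /
    (∑ l', ∑ q ∈ Finset.univ.filter (fun q => z q = c), (n q a l' : ℝ))

lemma gibbs_aux {ι : Type*} (s : Finset ι) (w p : ι → ℝ)
    (hw : ∀ i ∈ s, 0 ≤ w i) (hp : ∀ i ∈ s, 0 ≤ p i)
    (hps : ∑ i ∈ s, p i ≤ 1)
    (hwp : ∀ i ∈ s, 0 < w i → 0 < p i)
    (hWpos : 0 < ∑ j ∈ s, w j) :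
    ∑ i ∈ s, w i * Real.log (p i) ≤ ∑ i ∈ s, w i * Real.log (w i / (∑ j ∈ s, w j)) := by
  set W := ∑ j ∈ s, w j with hW
  have key : ∀ i ∈ s, w i * Real.log (p i) - w i * Real.log (w i / W) ≤ W * p i - w i := by
    intro i hi
    rcases eq_or_lt_of_le (hw i hi) with h0 | h0
    · rw [← h0]
      simp only [zero_mul, sub_zero]
      have := mul_nonneg hWpos.le (hp i hi)
      linarith
    · have hpi := hwp i hi h0
      have hlog : Real.log (p i) - Real.log (w i / W) = Real.log (p i * W / w i) := by
        rw [Real.log_div (ne_of_gt h0) (ne_of_gt hWpos),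
          Real.log_div (by positivity) (ne_of_gt h0), Real.log_mul (ne_of_gt hpi) (ne_of_gt hWpos)]
        ring
      have hle : Real.log (p i * W / w i) ≤ p i * W / w i - 1 :=
        Real.log_le_sub_one_of_pos (by positivity)
      have : w i * Real.log (p i * W / w i) ≤ w i * (p i * W / w i - 1) :=
        mul_le_mul_of_nonneg_left hle h0.le
      rw [mul_sub, mul_div_cancel₀ _ (ne_of_gt h0)] at this
      calc w i * Real.log (p i) - w i * Real.log (w i / W)
          = w i * (Real.log (p i) - Real.log (w i / W)) := by ring
        _ = w i * Real.log (p i * W / w i) := by rw [hlog]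
        _ ≤ p i * W - w i * 1 := this
        _ = W * p i - w i := by ring
  have hsum := Finset.sum_le_sum key
  rw [Finset.sum_sub_distrib, Finset.sum_sub_distrib, ← Finset.mul_sum] at hsum
  nlinarith [hsum, hWpos]

lemma C2_decomp {Q A C : Type*}
    [Fintype Q] [Fintype A] [Fintype C] [DecidableEq C]
    (n : Q → A → C → ℕ) (z : Q → C) (p : C → ℝ) (π : C → A → C → ℝ)
    (hpz : ∀ q, 0 < p (z q))
    (hπz : ∀ q a l, 0 < n q a l → π (z q) a l ≠ 0) :
    C2 n z p π =
      ∑ c, ((Finset.univ.filter (fun q => z q = c)).card : ℝ) * Real.log (p c) +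
      ∑ c, ∑ a, ∑ l, (∑ q ∈ Finset.univ.filter (fun q => z q = c), (n q a l : ℝ))
        * Real.log (π c a l) := by
  have hfne : ∀ q a l, (π (z q) a l) ^ (n q a l) ≠ 0 := by
    intro q a l
    rcases Nat.eq_zero_or_pos (n q a l) with h | h
    · simp [h]
    · exact pow_ne_zero _ (hπz q a l h)
  have hstep : ∀ q, Real.log (p (z q) * fDS n π q (z q)) =
      Real.log (p (z q)) + ∑ a, ∑ l, (n q a l : ℝ) * Real.log (π (z q) a l) := by
    intro q
    have hfpos : fDS n π q (z q) ≠ 0 := by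
      unfold fDS
      exact Finset.prod_ne_zero_iff.2 fun a _ =>
        Finset.prod_ne_zero_iff.2 fun l _ => hfne q a l
    rw [Real.log_mul (ne_of_gt (hpz q)) hfpos]
    congr 1
    unfold fDS
    rw [Real.log_prod (fun a _ => Finset.prod_ne_zero_iff.2 fun l _ => hfne q a l)]
    refine Finset.sum_congr rfl fun a _ => ?_
    rw [Real.log_prod (fun l _ => hfne q a l)]
    exact Finset.sum_congr rfl fun l _ => by rw [Real.log_pow]
  unfold C2
  simp_rw [hstep]
  rw [Finset.sum_add_distrib]
  congr 1
  · rw [← Finset.sum_fiberwise (g := z) (f := fun q => Real.log (p (z q)))]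
    refine Finset.sum_congr rfl fun c _ => ?_
    rw [Finset.sum_congr rfl (fun q hq => by
      rw [(Finset.mem_filter.1 hq).2]), Finset.sum_const, nsmul_eq_mul]
  · rw [← Finset.sum_fiberwise (g := z)
      (f := fun q => ∑ a, ∑ l, (n q a l : ℝ) * Real.log (π (z q) a l))]
    refine Finset.sum_congr rfl fun c _ => ?_
    rw [Finset.sum_comm]
    refine Finset.sum_congr rfl fun a _ => ?_
    rw [Finset.sum_comm]
    refine Finset.sum_congr rfl fun l _ => ?_
    rw [Finset.sum_mul]
    refine Finset.sum_congr rfl fun q hq => ?_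
    rw [(Finset.mem_filter.1 hq).2]

/-- M-step increases the CML criterion: for a hard assignment `z` with every class
nonempty and positive denominators, the maximum-likelihood estimators `p̂_z, π̂_z`
maximize `C₂(z, ·, ·)` over all admissible parameters. -/
theorem M_step_increases_C2 {Q A C : Type*}
    [Fintype Q] [Nonempty Q] [Fintype A] [Nonempty A] [Fintype C] [Nonempty C]
    [DecidableEq C] (n : Q → A → C → ℕ) (z : Q → C)
    (hz : ∀ c, ∃ q, z q = c)
    (hden : ∀ c a, 0 < ∑ l', ∑ q ∈ Finset.univ.filter (fun q => z q = c), n q a l')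
    (p : C → ℝ) (hp0 : ∀ c, 0 ≤ p c) (hp1 : ∑ c, p c = 1) (hpz : ∀ q, 0 < p (z q))
    (π : C → A → C → ℝ) (hπ0 : ∀ c a l, 0 ≤ π c a l) (hπ1 : ∀ c a, ∑ l, π c a l = 1)
    (hπz : ∀ q a l, 0 < n q a l → 0 < π (z q) a l) :
    C2 n z p π ≤ C2 n z (phat z) (pihat n z) := by
  -- notation
  set fib : C → Finset Q := fun c => Finset.univ.filter (fun q => z q = c) with hfib
  have hfibne : ∀ c, (fib c).Nonempty := by
    intro c
    obtain ⟨q, hq⟩ := hz c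
    exact ⟨q, Finset.mem_filter.2 ⟨Finset.mem_univ q, hq⟩⟩
  have hdenR : ∀ c a, 0 < ∑ l', ∑ q ∈ fib c, (n q a l' : ℝ) := by
    intro c a
    have := hden c a
    exact_mod_cast this
  -- positivity of the estimators where needed
  have hphatz : ∀ q, 0 < phat z (z q) := by
    intro q
    unfold phat
    have h1 : 0 < ((fib (z q)).card : ℝ) := by
      exact_mod_cast Finset.card_pos.2 (hfibne (z q))
    have h2 : 0 < (Fintype.card Q : ℝ) := by
      exact_mod_cast Fintype.card_pos
    positivity
  have hpihatz : ∀ q a l, 0 < n q a l → pihat n z (z q) a l ≠ 0 := by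
    intro q a l h
    unfold pihat
    have hnum : 0 < ∑ q' ∈ fib (z q), (n q' a l : ℝ) := by
      refine Finset.sum_pos' (fun q' _ => by positivity) ⟨q, ?_, by exact_mod_cast h⟩
      exact Finset.mem_filter.2 ⟨Finset.mem_univ q, rfl⟩
    exact ne_of_gt (div_pos hnum (hdenR (z q) a))
  rw [C2_decomp n z p π hpz (fun q a l h => ne_of_gt (hπz q a l h)),
    C2_decomp n z (phat z) (pihat n z) hphatz hpihatz]
  refine add_le_add ?_ ?_
  · -- class marginals part
    have hcard : ∑ c, ((fib c).card : ℝ) = ∑ c, ∑ q ∈ fib c, (1 : ℝ) := by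
      simp
    have hcardQ : ∑ c, ((fib c).card : ℝ) = (Fintype.card Q : ℝ) := by
      have : (Finset.univ : Finset Q).card = ∑ c, (fib c).card :=
        Finset.card_eq_sum_card_fiberwise (fun q _ => Finset.mem_univ (z q))
      rw [Fintype.card]
      exact_mod_cast this.symm
    have := gibbs_aux (Finset.univ : Finset C) (fun c => ((fib c).card : ℝ)) p
      (fun c _ => by positivity) (fun c _ => hp0 c) (le_of_eq hp1)
      (fun c _ _ => by obtain ⟨q, hq⟩ := hz c; exact hq ▸ hpz q)
      (by rw [hcardQ]; exact_mod_cast Fintype.card_pos)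
    refine this.trans (le_of_eq (Finset.sum_congr rfl fun c _ => ?_))
    unfold phat
    rw [hcardQ]
  · -- error rates part
    refine Finset.sum_le_sum fun c _ => Finset.sum_le_sum fun a _ => ?_
    have := gibbs_aux (Finset.univ : Finset C)
      (fun l => ∑ q ∈ fib c, (n q a l : ℝ)) (fun l => π c a l)
      (fun l _ => by positivity) (fun l _ => hπ0 c a l) (le_of_eq (hπ1 c a))
      (fun l _ hpos => by
        obtain ⟨q, hq, hnq⟩ := Finset.exists_lt_of_sum_lt (by simpa using hpos :
          ∑ q ∈ fib c, (0:ℝ) < ∑ q ∈ fib c, (n q a l : ℝ))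
        have hzq : z q = c := (Finset.mem_filter.1 hq).2
        have : 0 < n q a l := by exact_mod_cast hnq
        exact hzq ▸ hπz q a l this)
      (hdenR c a)
    exact this.trans (le_of_eq (Finset.sum_congr rfl fun l _ => rfl))
end

section
/- Strict increase of the EC-step when the assignment changes under tie-breaking: let p, π be parameters with p c > 0 and π c a l > 0 for all c, a, l, and let z' be a hard assignment such that for every q, z' q maximizes c ↦ p c · f(q, c) and z' q = z q whenever z q attains this maximum. If z' ≠ z, then C₂(z', p, π) > C₂(z, p, π). -/
open Finset

/-- Strict increase of the EC-step when the assignment changes under tie-breaking: if for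
every `q`, `z' q` maximizes `c ↦ p c * f(q, c)` and `z' q = z q` whenever `z q` attains
this maximum, then `z' ≠ z` implies `C₂(z', p, π) > C₂(z, p, π)`. -/
theorem EC_step_strict_increase {Q A C : Type*}
    [Fintype Q] [Nonempty Q] [Fintype A] [Nonempty A] [Fintype C] [Nonempty C]
    (n : Q → A → C → ℕ) (p : C → ℝ) (π : C → A → C → ℝ)
    (hp : ∀ c, 0 < p c) (hπ : ∀ c a l, 0 < π c a l)
    (z z' : Q → C)
    (hmax : ∀ q c, p c * fDS n π q c ≤ p (z' q) * fDS n π q (z' q))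
    (htie : ∀ q, (∀ c, p c * fDS n π q c ≤ p (z q) * fDS n π q (z q)) → z' q = z q)
    (hne : z' ≠ z) :
    C2 n z p π < C2 n z' p π := by
  have hf : ∀ q c, 0 < fDS n π q c := fun q c =>
    Finset.prod_pos fun a _ => Finset.prod_pos fun l _ => pow_pos (hπ c a l) _
  have hpos : ∀ q (c : C), 0 < p c * fDS n π q c := fun q c =>
    mul_pos (hp c) (hf q c)
  obtain ⟨q0, hq0⟩ : ∃ q, z' q ≠ z q := by
    by_contra h
    push_neg at h
    exact hne (funext h)
  apply Finset.sum_lt_sum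
  · intro q _
    exact Real.log_le_log (hpos q (z q)) (hmax q (z q))
  · refine ⟨q0, Finset.mem_univ _, ?_⟩
    have : ¬ ∀ c, p c * fDS n π q0 c ≤ p (z q0) * fDS n π q0 (z q0) :=
      fun h => hq0 (htie q0 h)
    push_neg at this
    obtain ⟨c, hc⟩ := this
    exact Real.log_lt_log (hpos q0 (z q0)) (lt_of_lt_of_le hc (hmax q0 c))
end

section
/- One full FDS iteration (M-step followed by EC-step) does not decrease the CML criterion: let z be a hard assignment such that every class is nonempty under z and, for each c, a, ∑_{l'} ∑_{q : z q = c} n q a l' > 0; let p̂ := p̂_z and π̂ := π̂_z be its maximum-likelihood estimators, and let z' be any hard assignment with z' q an argmax of c ↦ p̂ c · f̂(q, c) for every q, where f̂ is computed from π̂. Then for all parameters p with p c ≥ 0, ∑_c p c = 1, p (z q) > 0 for all q, and all π with π c a l ≥ 0, ∑_l π c a l = 1 and π (z q) a l > 0 whenever n q a l > 0, one has C₂(z', p̂, π̂) ≥ C₂(z, p, π). -/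
open Finset

/-- Gibbs' inequality: among subprobability vectors `x`, the normalized weights
`w i / ∑ w` maximize `∑ i, w i * log (x i)`. -/
private lemma gibbs_aux_s7 {ι : Type*} [Fintype ι] (w x : ι → ℝ) (hw : ∀ i, 0 ≤ w i)
    (hx0 : ∀ i, 0 ≤ x i) (hx1 : ∑ i, x i ≤ 1) (hpos : ∀ i, 0 < w i → 0 < x i)
    (hW0 : 0 < ∑ j, w j) :
    ∑ i, w i * Real.log (x i) ≤ ∑ i, w i * Real.log (w i / ∑ j, w j) := by
  set W := ∑ j, w j with hW
  have key : ∀ i ∈ Finset.univ,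
      w i * Real.log (x i) - w i * Real.log (w i / W) ≤ x i * W - w i := by
    intro i _
    rcases (hw i).eq_or_lt with h | h
    · simp only [← h, zero_mul, sub_zero]
      exact mul_nonneg (hx0 i) hW0.le
    · have hxi := hpos i h
      have hwW : 0 < w i / W := div_pos h hW0
      rw [← mul_sub, ← Real.log_div hxi.ne' hwW.ne']
      have hy : 0 < x i / (w i / W) := div_pos hxi hwW
      calc w i * Real.log (x i / (w i / W)) ≤ w i * (x i / (w i / W) - 1) :=
            mul_le_mul_of_nonneg_left (Real.log_le_sub_one_of_pos hy) h.le
        _ = x i * W - w i := by field_simp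
  have h1 := Finset.sum_le_sum key
  rw [Finset.sum_sub_distrib, Finset.sum_sub_distrib, ← Finset.sum_mul, ← hW] at h1
  nlinarith
private lemma fDS_pos {Q A C : Type*} [Fintype A] [Fintype C]
    (n : Q → A → C → ℕ) (π : C → A → C → ℝ) (q : Q) (c : C)
    (h : ∀ a l, 0 < n q a l → 0 < π c a l) : 0 < fDS n π q c := by
  refine Finset.prod_pos fun a _ => Finset.prod_pos fun l _ => ?_
  rcases Nat.eq_zero_or_pos (n q a l) with h0 | h0
  · simp [h0]
  · exact pow_pos (h a l h0) _

private lemma log_fDS {Q A C : Type*} [Fintype A] [Fintype C]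
    (n : Q → A → C → ℕ) (π : C → A → C → ℝ) (q : Q) (c : C)
    (h : ∀ a l, 0 < n q a l → 0 < π c a l) :
    Real.log (fDS n π q c) = ∑ a, ∑ l, (n q a l : ℝ) * Real.log (π c a l) := by
  have hne : ∀ a l, (π c a l) ^ (n q a l) ≠ 0 := by
    intro a l
    rcases Nat.eq_zero_or_pos (n q a l) with h0 | h0
    · simp [h0]
    · exact (pow_pos (h a l h0) _).ne'
  unfold fDS
  rw [Real.log_prod (fun a _ => (Finset.prod_ne_zero_iff.mpr fun l _ => hne a l))]
  refine Finset.sum_congr rfl fun a _ => ?_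
  rw [Real.log_prod (fun l _ => hne a l)]
  exact Finset.sum_congr rfl fun l _ => by rw [Real.log_pow]

/-- Grouping the CML criterion by classes. -/
private lemma C2_eq {Q A C : Type*} [Fintype Q] [Fintype A] [Fintype C] [DecidableEq C]
    (n : Q → A → C → ℕ) (z : Q → C) (p : C → ℝ) (π : C → A → C → ℝ)
    (hp : ∀ q, 0 < p (z q)) (hπ : ∀ q a l, 0 < n q a l → 0 < π (z q) a l) :
    C2 n z p π = ∑ c, (((Finset.univ.filter (fun q => z q = c)).card : ℝ) * Real.log (p c)
      + ∑ a, ∑ l, (∑ q ∈ Finset.univ.filter (fun q => z q = c), (n q a l : ℝ))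
          * Real.log (π c a l)) := by
  unfold C2
  have hq : ∀ q, Real.log (p (z q) * fDS n π q (z q)) =
      Real.log (p (z q)) + ∑ a, ∑ l, (n q a l : ℝ) * Real.log (π (z q) a l) := by
    intro q
    rw [Real.log_mul (hp q).ne' (fDS_pos n π q (z q) (hπ q)).ne', log_fDS n π q (z q) (hπ q)]
  simp_rw [hq]
  rw [← Finset.sum_fiberwise Finset.univ z
    (fun q => Real.log (p (z q)) + ∑ a, ∑ l, (n q a l : ℝ) * Real.log (π (z q) a l))]
  refine Finset.sum_congr rfl fun c _ => ?_
  have hcongr : ∀ q ∈ Finset.univ.filter (fun q => z q = c),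
      Real.log (p (z q)) + ∑ a, ∑ l, (n q a l : ℝ) * Real.log (π (z q) a l)
      = Real.log (p c) + ∑ a, ∑ l, (n q a l : ℝ) * Real.log (π c a l) := by
    intro q hq'
    rw [(Finset.mem_filter.mp hq').2]
  rw [Finset.sum_congr rfl hcongr, Finset.sum_add_distrib, Finset.sum_const, nsmul_eq_mul]
  congr 1
  rw [Finset.sum_comm]
  refine Finset.sum_congr rfl fun a _ => ?_
  rw [Finset.sum_comm]
  refine Finset.sum_congr rfl fun l _ => ?_
  rw [Finset.sum_mul]

/-- One full FDS iteration (M-step followed by EC-step) does not decrease the CML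
criterion: starting from a hard assignment `z` with every class nonempty and positive
denominators, taking `p̂ := p̂_z`, `π̂ := π̂_z` and any `z'` whose value at each `q` is an
argmax of `c ↦ p̂ c * f̂(q, c)`, one has `C₂(z', p̂, π̂) ≥ C₂(z, p, π)` for all admissible
parameters `p, π`. -/
theorem FDS_iteration_increases_C2 {Q A C : Type*}
    [Fintype Q] [Nonempty Q] [Fintype A] [Nonempty A] [Fintype C] [Nonempty C]
    [DecidableEq C] (n : Q → A → C → ℕ) (z : Q → C)
    (hz : ∀ c, ∃ q, z q = c)
    (hden : ∀ c a, 0 < ∑ l', ∑ q ∈ Finset.univ.filter (fun q => z q = c), n q a l')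
    (z' : Q → C)
    (hz' : ∀ q c, phat z c * fDS n (pihat n z) q c ≤
      phat z (z' q) * fDS n (pihat n z) q (z' q))
    (p : C → ℝ) (hp0 : ∀ c, 0 ≤ p c) (hp1 : ∑ c, p c = 1) (hpz : ∀ q, 0 < p (z q))
    (π : C → A → C → ℝ) (hπ0 : ∀ c a l, 0 ≤ π c a l) (hπ1 : ∀ c a, ∑ l, π c a l = 1)
    (hπz : ∀ q a l, 0 < n q a l → 0 < π (z q) a l) :
    C2 n z p π ≤ C2 n z' (phat z) (pihat n z) := by
  set S : C → Finset Q := fun c => Finset.univ.filter (fun q => z q = c) with hS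
  have hmemS : ∀ q, q ∈ S (z q) := fun q => Finset.mem_filter.mpr ⟨Finset.mem_univ q, rfl⟩
  -- real-valued denominators of pihat are positive
  have hdenR : ∀ c a, (0:ℝ) < ∑ l', ∑ q ∈ S c, (n q a l' : ℝ) := by
    intro c a
    have := hden c a
    exact_mod_cast this
  -- every class is nonempty, so phat is everywhere positive
  have hNpos : ∀ c, (0:ℝ) < ((S c).card : ℝ) := by
    intro c
    obtain ⟨q, hq⟩ := hz c
    have : q ∈ S c := Finset.mem_filter.mpr ⟨Finset.mem_univ q, hq⟩
    exact_mod_cast Finset.card_pos.mpr ⟨q, this⟩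
  have hphat : ∀ c, 0 < phat z c := fun c =>
    div_pos (hNpos c) (by exact_mod_cast Fintype.card_pos)
  -- pihat positivity where needed
  have hpihat : ∀ q a l, 0 < n q a l → 0 < pihat n z (z q) a l := by
    intro q a l hn
    apply div_pos _ (hdenR (z q) a)
    have h1 : (n q a l : ℝ) ≤ ∑ q' ∈ S (z q), (n q' a l : ℝ) :=
      Finset.single_le_sum (f := fun q' => (n q' a l : ℝ)) (fun i _ => by positivity) (hmemS q)
    have : (0:ℝ) < (n q a l : ℝ) := by exact_mod_cast hn
    linarith
  -- the more general positivity: if the total count of label l in class c is positive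
  have hpihat' : ∀ c a l, 0 < ∑ q ∈ S c, (n q a l : ℝ) → 0 < π c a l := by
    intro c a l hm
    by_contra hle
    push_neg at hle
    have : ∀ q ∈ S c, (n q a l : ℝ) = 0 := by
      intro q hq'
      have hzq := (Finset.mem_filter.mp hq').2
      by_contra hne
      have hn : 0 < n q a l := Nat.pos_of_ne_zero (by exact_mod_cast hne)
      have := hπz q a l hn
      rw [hzq] at this
      linarith
    rw [Finset.sum_eq_zero this] at hm
    exact lt_irrefl 0 hm
  -- Step 1: M-step increases the criterion
  have step1 : C2 n z p π ≤ C2 n z (phat z) (pihat n z) := by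
    rw [C2_eq n z p π hpz hπz,
        C2_eq n z (phat z) (pihat n z) (fun q => hphat (z q)) hpihat,
        Finset.sum_add_distrib, Finset.sum_add_distrib]
    apply add_le_add
    · -- class marginals part: Gibbs over classes
      have hsum : (Fintype.card Q : ℝ) = ∑ c, ((S c).card : ℝ) := by
        have := Finset.card_eq_sum_card_fiberwise
          (f := z) (s := Finset.univ) (t := Finset.univ) (fun x _ => Finset.mem_univ _)
        rw [← Finset.card_univ, this]
        push_cast
        rfl
      have hWpos : (0:ℝ) < ∑ c, ((S c).card : ℝ) := by
        rw [← hsum]; exact_mod_cast Fintype.card_pos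
      have := gibbs_aux_s7 (fun c => ((S c).card : ℝ)) p (fun c => by positivity)
        hp0 hp1.le (fun c _ => by
          obtain ⟨q, hq⟩ := hz c
          rw [← hq]; exact hpz q) hWpos
      refine this.trans_eq (Finset.sum_congr rfl fun c _ => ?_)
      unfold phat
      rw [hsum]
    · -- error rates part: Gibbs over labels, for each class and annotator
      refine Finset.sum_le_sum fun c _ => Finset.sum_le_sum fun a _ => ?_
      have := gibbs_aux_s7 (fun l => ∑ q ∈ S c, (n q a l : ℝ)) (fun l => π c a l)
        (fun l => Finset.sum_nonneg fun q _ => by positivity)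
        (fun l => hπ0 c a l) (hπ1 c a).le (fun l hl => hpihat' c a l hl) (hdenR c a)
      exact this.trans_eq (Finset.sum_congr rfl fun l _ => rfl)
  -- Step 2: EC-step increases the criterion
  have step2 : C2 n z (phat z) (pihat n z) ≤ C2 n z' (phat z) (pihat n z) := by
    unfold C2
    refine Finset.sum_le_sum fun q _ => ?_
    have hposq : 0 < phat z (z q) * fDS n (pihat n z) q (z q) :=
      mul_pos (hphat (z q)) (fDS_pos n (pihat n z) q (z q) (hpihat q))
    exact Real.log_le_log hposq (hz' q (z q))
  exact step1.trans step2
end
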